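/- arXiv:1404.4227 — 3 statements merged into one kernel-verified Lean document; each statement's English description precedes it below -/
import Mathlib

section
/- An n-dimensional real subspace π of Cⁿ is totally real (i.e. i·π ∩ π = {0}) if and only if α restricted to π is nonzero, where α = dz₁ ∧ ⋯ ∧ dzₙ is the standard complex volume form. Equivalently, for a basis v₁, …, vₙ of π, π is totally real iff α(v₁, …, vₙ) ≠ 0. -/
/-!
Splitting complex coefficients into real and imaginary parts writes a complex combination
`∑ cⱼ vⱼ` as `y + i • x` with `x, y` in the real span `π` of the `vⱼ`. Hence a nontrivial
complex relation among real-independent `vⱼ` amounts to a nonzero `x ∈ π` with `i • x ∈ π`: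
`π` is totally real iff the `vⱼ` are `ℂ`-linearly independent, i.e. iff `det (vⱼ)ᵢ ≠ 0`.
-/

open Complex Submodule Set

def Submodule.IsTotallyReal {V : Type*} [AddCommGroup V] [Module ℂ V] [Module ℝ V]
    (π : Submodule ℝ V) : Prop :=
  ∀ x ∈ π, I • x ∈ π → x = 0

section

variable {ι V : Type*} [Fintype ι] [AddCommGroup V] [Module ℂ V] [Module ℝ V]
  [IsScalarTower ℝ ℂ V]

theorem sum_smul_eq_sum_re_smul_add_I_smul_sum_im_smul (c : ι → ℂ) (v : ι → V) :
    ∑ j, c j • v j = ∑ j, (c j).re • v j + I • ∑ j, (c j).im • v j := by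
  simp only [Finset.smul_sum, ← Finset.sum_add_distrib]
  refine Finset.sum_congr rfl fun j _ => ?_
  conv_lhs => rw [← re_add_im (c j)]
  rw [add_smul, mul_comm, mul_smul, ← coe_algebraMap, algebraMap_smul, algebraMap_smul]

theorem LinearIndependent.complex_iff_isTotallyReal_span {v : ι → V}
    (hv : LinearIndependent ℝ v) :
    LinearIndependent ℂ v ↔ (span ℝ (range v)).IsTotallyReal := by
  simp only [Submodule.IsTotallyReal, mem_span_range_iff_exists_fun]
  rw [Fintype.linearIndependent_iff] at hv ⊢
  constructor
  · rintro hv_complex _ ⟨a, rfl⟩ ⟨a', ha'⟩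
    have hrel : ∑ j, (I * a j - a' j) • v j = 0 := by
      rw [sum_smul_eq_sum_re_smul_add_I_smul_sum_im_smul]
      simp [ha']
    have ha : ∀ j, a j = 0 := fun j => by simpa using congrArg im (hv_complex _ hrel j)
    simp [ha]
  · rintro hπ c hc j
    rw [sum_smul_eq_sum_re_smul_add_I_smul_sum_im_smul] at hc
    have hI : I • ∑ j, (c j).im • v j = -∑ j, (c j).re • v j := eq_neg_of_add_eq_zero_right hc
    have him := hπ (∑ j, (c j).im • v j) ⟨_, rfl⟩ ⟨fun j => -(c j).re, by simp [hI]⟩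
    rw [him, smul_zero, add_zero] at hc
    exact Complex.ext (hv _ hc j) (hv _ him j)

end

theorem Matrix.det_ne_zero_iff_linearIndependent_col {n K : Type*} [Fintype n] [DecidableEq n]
    [Field K] (A : Matrix n n K) : A.det ≠ 0 ↔ LinearIndependent K A.col := by
  rw [linearIndependent_cols_iff_isUnit, isUnit_iff_isUnit_det, isUnit_iff_ne_zero]

/-- An `n`-dimensional real subspace `π` of `ℂⁿ` (given by a real basis
`b`) is totally real (`i·π ∩ π = {0}`) iff the standard complex volume form
`α = dz₁ ∧ ⋯ ∧ dzₙ` is nonzero on it, i.e. iff `α(b₁,…,bₙ) = det (bⱼ)ᵢ ≠ 0`. -/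
theorem stmt2 {n : ℕ} (π : Submodule ℝ (Fin n → ℂ)) (b : Module.Basis (Fin n) ℝ π) :
    (∀ x ∈ π, Complex.I • x ∈ π → x = 0) ↔
      (Matrix.of fun i j => ((b j : Fin n → ℂ) i)).det ≠ 0 := by
  have hli : LinearIndependent ℝ fun j => (b j : Fin n → ℂ) :=
    b.linearIndependent.map' π.subtype π.ker_subtype
  have hspan : span ℝ (range fun j => (b j : Fin n → ℂ)) = π := by
    change span ℝ (range (π.subtype ∘ b)) = π
    rw [range_comp, span_image, b.span_eq, map_subtype_top]
  have hcomplex := hli.complex_iff_isTotallyReal_span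
  rw [hspan] at hcomplex
  rw [Matrix.det_ne_zero_iff_linearIndependent_col]
  exact hcomplex.symm
end

section
/- Let V be a complex n-dimensional Hermitian vector space with Hermitian metric h = g − iω (g the real inner product, ω the symplectic form). Let e₁, …, eₙ be g-orthonormal vectors in V spanning a totally real subspace π. Then det_C(h(eᵢ, eⱼ)) is a real number satisfying 0 < det_C(h(eᵢ,eⱼ)) ≤ 1, with equality det_C(h(eᵢ,eⱼ)) = 1 if and only if π is Lagrangian (i.e. ω(eᵢ, eⱼ) = 0 for all i, j). -/
/-!
The Gram matrix `G = (h(eᵢ,eⱼ))` is Hermitian with unit diagonal, and it is positive definite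
because a `g`-orthonormal family spanning a totally real subspace is `ℂ`-linearly independent.
Its eigenvalues `μᵢ` are therefore positive with `∑ μᵢ = tr G = n`, so `log det G = ∑ log μᵢ ≤
∑ (μᵢ - 1) = 0`, with equality only when every `μᵢ = 1`, i.e. `G = 1`; and `G = 1` says exactly
that `ω(eᵢ,eⱼ) = Im h(eᵢ,eⱼ)` vanishes.
-/

open scoped InnerProductSpace ComplexOrder

open Complex Submodule in
theorem LinearIndependent.complex_of_real {ι V : Type*} [AddCommGroup V] [Module ℂ V]
    {v : ι → V} (hv : LinearIndependent ℝ v)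
    (htr : ∀ x ∈ span ℝ (Set.range v), I • x ∈ span ℝ (Set.range v) → x = 0) :
    LinearIndependent ℂ v := by
  classical
  rw [linearIndependent_iff'] at hv ⊢
  intro s c hc i hi
  have hmem (r : ι → ℝ) : ∑ j ∈ s, r j • v j ∈ span ℝ (Set.range v) :=
    Submodule.sum_mem _ fun j _ => Submodule.smul_mem _ _ (subset_span ⟨j, rfl⟩)
  set u := ∑ j ∈ s, (c j).re • v j
  set w := ∑ j ∈ s, (c j).im • v j
  have hsplit : u + I • w = 0 := by
    rw [← hc, Finset.smul_sum, ← Finset.sum_add_distrib]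
    refine Finset.sum_congr rfl fun j _ => ?_
    conv_rhs => rw [← re_add_im (c j)]
    rw [add_smul, mul_comm, mul_smul, ← Complex.coe_smul, ← Complex.coe_smul]
  have hw : w = 0 := htr w (hmem _) <| by
    rw [eq_neg_of_add_eq_zero_right hsplit]; exact Submodule.neg_mem _ (hmem _)
  have hu : u = 0 := by simpa [hw] using hsplit
  exact Complex.ext (hv s _ hu i hi) (hv s _ hw i hi)

theorem linearIndependent_real_of_re_inner {ι V : Type*} [NormedAddCommGroup V]
    [InnerProductSpace ℂ V] [DecidableEq ι] {v : ι → V}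
    (h : ∀ i j, (⟪v i, v j⟫_ℂ).re = if i = j then 1 else 0) :
    LinearIndependent ℝ v := by
  let _ := InnerProductSpace.complexToReal (G := V)
  have hv : Orthonormal ℝ v :=
    orthonormal_iff_ite.mpr fun i j => by rw [real_inner_eq_re_inner]; exact h i j
  exact hv.linearIndependent

namespace Real

variable {ι : Type*} [Fintype ι] {μ : ι → ℝ}

theorem sum_sub_one_sub_log_eq (hpos : ∀ i, 0 < μ i) (hsum : ∑ i, μ i = Fintype.card ι) :
    ∑ i, (μ i - 1 - log (μ i)) = -log (∏ i, μ i) := by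
  rw [log_prod fun i _ => (hpos i).ne', Finset.sum_sub_distrib, Finset.sum_sub_distrib, hsum]
  simp

theorem prod_le_one_of_sum_eq_card (hpos : ∀ i, 0 < μ i) (hsum : ∑ i, μ i = Fintype.card ι) :
    ∏ i, μ i ≤ 1 := by
  have hnonneg : 0 ≤ ∑ i, (μ i - 1 - log (μ i)) :=
    Finset.sum_nonneg fun i _ => by linarith [log_le_sub_one_of_pos (hpos i)]
  rw [sum_sub_one_sub_log_eq hpos hsum, neg_nonneg] at hnonneg
  exact (log_nonpos_iff (Finset.prod_nonneg fun i _ => (hpos i).le)).mp hnonneg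

theorem eq_one_of_prod_eq_one_of_sum_eq_card (hpos : ∀ i, 0 < μ i)
    (hsum : ∑ i, μ i = Fintype.card ι) (hprod : ∏ i, μ i = 1) (i : ι) : μ i = 1 := by
  have hzero : ∑ i, (μ i - 1 - log (μ i)) = 0 := by
    rw [sum_sub_one_sub_log_eq hpos hsum, hprod, log_one, neg_zero]
  have hterm := (Finset.sum_eq_zero_iff_of_nonneg fun j _ => by
    linarith [log_le_sub_one_of_pos (hpos j)]).mp hzero i (Finset.mem_univ i)
  by_contra hne
  linarith [log_lt_sub_one_of_pos (hpos i) hne]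

end Real

namespace Matrix

variable {𝕜 n : Type*} [RCLike 𝕜] [Fintype n] [DecidableEq n] {A : Matrix n n 𝕜}

theorem IsHermitian.sum_eigenvalues_eq_card_of_diag_eq_one (hA : A.IsHermitian)
    (hdiag : ∀ i, A i i = 1) : ∑ i, hA.eigenvalues i = Fintype.card n := by
  have htrace : A.trace = Fintype.card n := by simp [trace, hdiag]
  rw [hA.trace_eq_sum_eigenvalues] at htrace
  exact_mod_cast htrace

theorem IsHermitian.eq_one_of_eigenvalues_eq_one (hA : A.IsHermitian)
    (h : ∀ i, hA.eigenvalues i = 1) : A = 1 := by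
  rw [hA.spectral_theorem, show RCLike.ofReal ∘ hA.eigenvalues = 1 by ext i; simp [h],
    Pi.one_def, diagonal_one, map_one]

theorem PosDef.det_le_one_of_diag_eq_one (hA : A.PosDef) (hdiag : ∀ i, A i i = 1) :
    A.det ≤ 1 := by
  rw [hA.isHermitian.det_eq_prod_eigenvalues, ← RCLike.ofReal_prod, ← RCLike.ofReal_one,
    RCLike.ofReal_le_ofReal]
  exact Real.prod_le_one_of_sum_eq_card hA.eigenvalues_pos
    (hA.isHermitian.sum_eigenvalues_eq_card_of_diag_eq_one hdiag)

theorem PosDef.eq_one_of_det_eq_one_of_diag_eq_one (hA : A.PosDef) (hdiag : ∀ i, A i i = 1)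
    (hdet : A.det = 1) : A = 1 := by
  rw [hA.isHermitian.det_eq_prod_eigenvalues, ← RCLike.ofReal_prod, ← RCLike.ofReal_one,
    RCLike.ofReal_inj] at hdet
  exact hA.isHermitian.eq_one_of_eigenvalues_eq_one <|
    Real.eq_one_of_prod_eq_one_of_sum_eq_card hA.eigenvalues_pos
      (hA.isHermitian.sum_eigenvalues_eq_card_of_diag_eq_one hdiag) hdet

end Matrix

theorem gram_eq_one_iff_im_inner_eq_zero {ι V : Type*} [NormedAddCommGroup V]
    [InnerProductSpace ℂ V] [DecidableEq ι] {v : ι → V}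
    (horth : ∀ i j, (⟪v i, v j⟫_ℂ).re = if i = j then 1 else 0) :
    Matrix.gram ℂ v = 1 ↔ ∀ i j, (⟪v i, v j⟫_ℂ).im = 0 := by
  simp only [← Matrix.ext_iff, Matrix.gram_apply, Complex.ext_iff, horth, Matrix.one_apply]
  refine forall₂_congr fun i j => ?_
  split_ifs <;> simp

theorem stmt4_general {n : ℕ} {V : Type*} [NormedAddCommGroup V] [InnerProductSpace ℂ V]
    (e : Fin n → V)
    (horth : ∀ i j, (⟪e i, e j⟫_ℂ).re = if i = j then 1 else 0)
    (htr : ∀ x ∈ Submodule.span ℝ (Set.range e),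
      Complex.I • x ∈ Submodule.span ℝ (Set.range e) → x = 0) :
    let D : ℂ := (Matrix.of fun i j => (⟪e i, e j⟫_ℂ)).det
    D.im = 0 ∧ 0 < D.re ∧ D.re ≤ 1 ∧
      (D.re = 1 ↔ ∀ i j, (⟪e i, e j⟫_ℂ).im = 0) := by
  intro D
  have hD : D = (Matrix.gram ℂ e).det := rfl
  have hG : (Matrix.gram ℂ e).PosDef := Matrix.posDef_gram_of_linearIndependent <|
    (linearIndependent_real_of_re_inner horth).complex_of_real htr
  have hdiag : ∀ i, Matrix.gram ℂ e i i = 1 := fun i =>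
    Complex.ext (by simpa using horth i i) <| by
      rw [Matrix.gram_apply, Complex.one_im]; exact inner_self_im (𝕜 := ℂ) (e i)
  obtain ⟨hpos, him⟩ := Complex.lt_def.mp hG.det_pos
  have hle : D.re ≤ 1 := (Complex.le_def.mp (hG.det_le_one_of_diag_eq_one hdiag)).1
  refine ⟨him.symm, hpos, hle, ?_⟩
  rw [← gram_eq_one_iff_im_inner_eq_zero horth]
  constructor
  · exact fun h1 => hG.eq_one_of_det_eq_one_of_diag_eq_one hdiag (Complex.ext h1 him.symm)
  · intro h1
    simp [hD, h1]

/-- For `g`-orthonormal vectors `e₁,…,eₙ` spanning a totally real subspace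
of an `n`-dimensional Hermitian space `V` (with `h = g - iω`), the complex determinant
`det_C(h(eᵢ,eⱼ))` is real, lies in `(0,1]`, and equals `1` iff the subspace is
Lagrangian (`ω(eᵢ,eⱼ) = 0` for all `i,j`). -/
theorem stmt4 {n : ℕ} {V : Type*} [NormedAddCommGroup V] [InnerProductSpace ℂ V]
    [FiniteDimensional ℂ V] (hdim : Module.finrank ℂ V = n)
    (e : Fin n → V)
    (horth : ∀ i j, (⟪e i, e j⟫_ℂ).re = if i = j then 1 else 0)
    (htr : ∀ x ∈ Submodule.span ℝ (Set.range e),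
      Complex.I • x ∈ Submodule.span ℝ (Set.range e) → x = 0) :
    let D : ℂ := (Matrix.of fun i j => (⟪e i, e j⟫_ℂ)).det
    D.im = 0 ∧ 0 < D.re ∧ D.re ≤ 1 ∧
      (D.re = 1 ↔ ∀ i j, (⟪e i, e j⟫_ℂ).im = 0) :=
  stmt4_general e horth htr
end

section
/- Let g and ω be the real and symplectic parts of a Hermitian metric on Cⁿ and let π be a totally real n-plane with oriented g-orthonormal basis e₁,…,eₙ. Define ρ_J(π) = sqrt(det_C h(eᵢ,eⱼ)). Then ρ_J(π)² = vol(e₁, …, eₙ, Je₁, …, Jeₙ), where vol is the Riemannian volume form of the real 2n-dimensional inner product space. -/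
/-!
The Gram matrix `h(eᵢ, eⱼ)` is `AᴴA`, where `A` has the coordinate vectors of the `eⱼ` as
columns, so its determinant is `|det A|²`. The real matrix of `e₁, …, eₙ, ie₁, …, ieₙ` is the
realification `[[Re A, -Im A], [Im A, Re A]]` of `A`, and conjugating it by `[[1, i], [0, 1]]`
over `ℂ` makes it block triangular with diagonal blocks `A` and `Ā`; hence its determinant is
`det A · conj (det A) = |det A|²` as well.
-/

open scoped InnerProductSpace

open Matrix

def Matrix.complexToReal {m n : Type*} (A : Matrix m n ℂ) : Matrix (m ⊕ m) (n ⊕ n) ℝ :=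
  fromBlocks (A.map Complex.re) (-A.map Complex.im) (A.map Complex.im) (A.map Complex.re)

theorem Matrix.det_fromBlocks_neg_eq_det_add_smul_mul_det_sub_smul {m R : Type*} [Fintype m]
    [DecidableEq m] [CommRing R] {i : R} (hi : i * i = -1) (X Y : Matrix m m R) :
    (fromBlocks X (-Y) Y X).det = (X + i • Y).det * (X - i • Y).det := by
  have htriang : fromBlocks (1 : Matrix m m R) (i • 1) 0 1 * fromBlocks X (-Y) Y X *
      fromBlocks 1 (-(i • (1 : Matrix m m R))) 0 1 = fromBlocks (X + i • Y) 0 Y (X - i • Y) := by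
    rw [fromBlocks_multiply, fromBlocks_multiply, fromBlocks_inj]
    refine ⟨?_, ?_, ?_, ?_⟩ <;>
      simp [smul_smul, hi, sub_eq_add_neg] <;> abel
  have h := congrArg det htriang
  rw [det_mul, det_mul, det_fromBlocks_zero₂₁, det_fromBlocks_zero₂₁, det_fromBlocks_zero₁₂] at h
  simpa using h

theorem Matrix.det_complexToReal {m : Type*} [Fintype m] [DecidableEq m] (A : Matrix m m ℂ) :
    A.complexToReal.det = Complex.normSq A.det := by
  set X : Matrix m m ℂ := A.map (fun z => (z.re : ℂ))
  set Y : Matrix m m ℂ := A.map (fun z => (z.im : ℂ))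
  have hcomplexify : A.complexToReal.map Complex.ofReal = fromBlocks X (-Y) Y X := by
    ext (r | r) (c | c) <;> simp [complexToReal, X, Y]
  have hadd : X + Complex.I • Y = A := by
    ext r c
    simp [X, Y, mul_comm Complex.I, Complex.re_add_im]
  have hsub : X - Complex.I • Y = A.map (starRingEnd ℂ) := by
    ext r c
    simp [X, Y, Complex.ext_iff]
  apply Complex.ofReal_injective
  have hdet : (A.complexToReal.det : ℂ) = (A.complexToReal.map Complex.ofReal).det :=
    Complex.ofRealHom.map_det _
  rw [hdet, hcomplexify, det_fromBlocks_neg_eq_det_add_smul_mul_det_sub_smul Complex.I_mul_I,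
    hadd, hsub, ← RingHom.mapMatrix_apply, ← RingHom.map_det, Complex.mul_conj]

theorem stmt6_general {n : ℕ} (e : Fin n → EuclideanSpace ℂ (Fin n)) :
    let w : Fin n ⊕ Fin n → EuclideanSpace ℂ (Fin n) :=
      Sum.elim e (fun j => Complex.I • e j)
    let B : Matrix (Fin n ⊕ Fin n) (Fin n ⊕ Fin n) ℝ :=
      Matrix.of fun r c => Sum.elim (fun i => (w c i).re) (fun i => (w c i).im) r
    (Matrix.of fun i j => (⟪e i, e j⟫_ℂ)).det = (B.det : ℂ) := by
  intro w B
  set A : Matrix (Fin n) (Fin n) ℂ := of fun i j => e j i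
  have hB : B = A.complexToReal := by
    ext (r | r) (c | c) <;> simp [B, w, A, Matrix.complexToReal]
  have hgram : gram ℂ e = Aᴴ * A := gram_eq_conjTranspose_mul (EuclideanSpace.basisFun _ ℂ) e
  change (gram ℂ e).det = _
  rw [hB, det_complexToReal, hgram, det_mul, det_conjTranspose, Complex.star_def,
    Complex.normSq_eq_conj_mul_self]

/-- In `ℂⁿ` with its standard Hermitian structure (`h = g − iω`,
`J = multiplication by i`), for a totally real `n`-plane with `g`-orthonormal basis
`e₁,…,eₙ`, one has `ρ_J(π)² = det_C h(eᵢ,eⱼ) = vol(e₁,…,eₙ,Je₁,…,Jeₙ)`, where `vol`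
is the Riemannian volume form of the underlying real `2n`-dimensional space (the
determinant of the real coordinate matrix of the `2n` vectors). -/
theorem stmt6 {n : ℕ} (e : Fin n → EuclideanSpace ℂ (Fin n))
    (horth : ∀ i j, (⟪e i, e j⟫_ℂ).re = if i = j then 1 else 0)
    (htr : ∀ x ∈ Submodule.span ℝ (Set.range e),
      Complex.I • x ∈ Submodule.span ℝ (Set.range e) → x = 0) :
    let w : Fin n ⊕ Fin n → EuclideanSpace ℂ (Fin n) :=
      Sum.elim e (fun j => Complex.I • e j)
    let B : Matrix (Fin n ⊕ Fin n) (Fin n ⊕ Fin n) ℝ :=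
      Matrix.of fun r c => Sum.elim (fun i => (w c i).re) (fun i => (w c i).im) r
    (Matrix.of fun i j => (⟪e i, e j⟫_ℂ)).det = (B.det : ℂ) :=
  stmt6_general e
end
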